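/- Let p > 3 be a prime and let G = Φ₁₉(1⁶) be the group of order p⁶ with presentation on generators α, α₁, α₂, β, β₁, β₂ and relations [α₁,α₂] = β, [β,α₁] = β₁, [β,α₂] = β₂, [α,α₁] = β₁, αᵖ = α₁ᵖ = α₂ᵖ = βᵖ = β₁ᵖ = β₂ᵖ = 1, with every commutator of a pair of generators not listed among these relations declared trivial. Then the Bogomolov multiplier B₀(G) is trivial. -/

import Mathlib

/-!
A cocycle `f` that vanishes on bicyclic subgroups defines a central extension `E` of `G` by `ℚ/ℤ`
in which lifts of commuting elements commute, because `E` splits over the bicyclic subgroup they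
generate. So commutators of lifts depend only on the images, and lifts of central elements are
central. As `ℚ/ℤ` is divisible, `α, α₁, α₂` have lifts `A, A₁, A₂` with `Aᵖ = A₁ᵖ = A₂ᵖ = 1`; put
`B = [A₁, A₂]`, `B₁ = [B, A₁]`, `B₂ = [B, A₂]`. The relation `[A, A₁] = B₁` holds because `αβ⁻¹`
commutes with `α₁`, and the `p`-th power relations follow from
`[x, yⁿ] = [x, y]ⁿ [[x, y], y]^(n choose 2)` for central `[[x, y], y]`, since `p` divides
`p choose 2` for odd `p`. Hence the generators lift to `E` satisfying all relations, `E → G` splits,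
and `f` is a coboundary.
-/

namespace Stmt1

/-- The additive group `ℚ/ℤ`. -/
abbrev QZ : Type := ℚ ⧸ AddSubgroup.zmultiples (1 : ℚ)

/-- An inhomogeneous 2-cocycle on `G` with values in `ℚ/ℤ` (trivial `G`-action). -/
def IsTwoCocycle {G : Type} [Group G] (f : G → G → QZ) : Prop :=
  ∀ g h j : G, f h j - f (g * h) j + f g (h * j) - f g h = 0

/-- An inhomogeneous 2-coboundary on `G` with values in `ℚ/ℤ` (trivial `G`-action). -/
def IsTwoCoboundary {G : Type} [Group G] (f : G → G → QZ) : Prop :=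
  ∃ c : G → QZ, ∀ g h : G, f g h = c h - c (g * h) + c g

/-- A subgroup is bicyclic if it is abelian and generated by at most two elements
(equivalently, cyclic or a direct product of two cyclic groups). -/
def IsBicyclic {G : Type} [Group G] (A : Subgroup G) : Prop :=
  (∀ x y : A, x * y = y * x) ∧ ∃ a b : G, A = Subgroup.closure {a, b}

/-- The Bogomolov multiplier `B₀(G) ⊆ H²(G, ℚ/ℤ)` is trivial, phrased at the level of
2-cocycles: every 2-cocycle whose restriction to each bicyclic subgroup is a coboundary
(i.e. whose class restricts to zero on each bicyclic subgroup) is itself a coboundary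
(i.e. its class is zero). -/
def BogomolovMultiplierIsTrivial (G : Type) [Group G] : Prop :=
  ∀ f : G → G → QZ, IsTwoCocycle f →
    (∀ A : Subgroup G, IsBicyclic A → IsTwoCoboundary (fun a b : ↥A => f ↑a ↑b)) →
    IsTwoCoboundary f

/-- The Bogomolov multiplier `B₀(G) ⊆ H²(G, ℚ/ℤ)` is nontrivial, phrased at the level of
2-cocycles. -/
def BogomolovMultiplierIsNontrivial (G : Type) [Group G] : Prop :=
  ∃ f : G → G → QZ, IsTwoCocycle f ∧
    (∀ A : Subgroup G, IsBicyclic A → IsTwoCoboundary (fun a b : ↥A => f ↑a ↑b)) ∧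
    ¬ IsTwoCoboundary f

/-- The generators. -/
inductive Gen | a | a1 | a2 | b | b1 | b2

open FreeGroup

/-- The commutator `[x,y] = x⁻¹y⁻¹xy`. -/
def c (x y : FreeGroup Gen) : FreeGroup Gen := x⁻¹ * y⁻¹ * x * y

/-- The defining relators. -/
def rels (p : ℕ) : Set (FreeGroup Gen) :=
  { c (of .a1) (of .a2) * (of Gen.b)⁻¹,
    c (of .b) (of .a1) * (of Gen.b1)⁻¹,
    c (of .b) (of .a2) * (of Gen.b2)⁻¹,
    c (of .a) (of .a1) * (of Gen.b1)⁻¹,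
    c (of .a) (of .a2),
    c (of .a) (of .b),
    c (of .a) (of .b1),
    c (of .a) (of .b2),
    c (of .a1) (of .b1),
    c (of .a1) (of .b2),
    c (of .a2) (of .b1),
    c (of .a2) (of .b2),
    c (of .b) (of .b1),
    c (of .b) (of .b2),
    c (of .b1) (of .b2),
    (of Gen.a) ^ p,
    (of Gen.a1) ^ p,
    (of Gen.a2) ^ p,
    (of Gen.b) ^ p,
    (of Gen.b1) ^ p,
    (of Gen.b2) ^ p }

section Cocycles

variable {G : Type} [Group G]

def IsBicyclicallyTrivial (f : G → G → QZ) : Prop :=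
  ∀ A : Subgroup G, IsBicyclic A → IsTwoCoboundary fun a b : A => f a b

lemma IsTwoCocycle.sub_const {f : G → G → QZ} (hf : IsTwoCocycle f) (k : QZ) :
    IsTwoCocycle fun g h => f g h - k := fun g h j => by
  dsimp only
  rw [← hf g h j]
  abel

lemma isTwoCoboundary_sub_const_iff {f : G → G → QZ} (k : QZ) :
    IsTwoCoboundary (fun g h => f g h - k) ↔ IsTwoCoboundary f := by
  constructor
  · rintro ⟨c, hc⟩
    refine ⟨fun g => c g + k, fun g h => ?_⟩
    dsimp only at hc ⊢
    rw [← sub_add_cancel (f g h) k, hc g h]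
    abel
  · rintro ⟨c, hc⟩
    refine ⟨fun g => c g - k, fun g h => ?_⟩
    dsimp only
    rw [hc g h]
    abel

lemma IsBicyclicallyTrivial.sub_const {f : G → G → QZ} (hf : IsBicyclicallyTrivial f) (k : QZ) :
    IsBicyclicallyTrivial fun g h => f g h - k := fun A hA =>
  (isTwoCoboundary_sub_const_iff (f := fun a b : A => f a b) k).mpr (hf A hA)

structure NormalizedCocycle (G : Type) [Group G] where
  f : G → G → QZ
  isTwoCocycle : IsTwoCocycle f
  map_one_one : f 1 1 = 0

lemma bogomolovMultiplierIsTrivial_of_normalized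
    (h : ∀ D : NormalizedCocycle G, IsBicyclicallyTrivial D.f → IsTwoCoboundary D.f) :
    BogomolovMultiplierIsTrivial G := by
  intro f hf hbi
  rw [← isTwoCoboundary_sub_const_iff (f 1 1)]
  exact h ⟨_, hf.sub_const (f 1 1), sub_self _⟩ (IsBicyclicallyTrivial.sub_const hbi _)

namespace NormalizedCocycle

variable (D : NormalizedCocycle G)

lemma map_one_left (g : G) : D.f 1 g = 0 := by
  simpa [D.map_one_one] using D.isTwoCocycle 1 1 g

lemma map_one_right (g : G) : D.f g 1 = 0 := by
  simpa [D.map_one_one] using D.isTwoCocycle g 1 1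

lemma map_inv_self (g : G) : D.f g⁻¹ g = D.f g g⁻¹ := by
  have h := D.isTwoCocycle g g⁻¹ g
  rw [mul_inv_cancel, inv_mul_cancel, D.map_one_left, D.map_one_right] at h
  rw [← sub_eq_zero, ← h]
  abel

end NormalizedCocycle

@[ext] structure Extension (D : NormalizedCocycle G) : Type where
  fiber : QZ
  base : G

namespace Extension

variable {D : NormalizedCocycle G}

instance : Group (Extension D) where
  mul x y := ⟨x.fiber + y.fiber + D.f x.base y.base, x.base * y.base⟩
  one := ⟨0, 1⟩
  inv x := ⟨-x.fiber - D.f x.base x.base⁻¹, x.base⁻¹⟩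
  mul_assoc x y z := by
    refine Extension.ext ?_ (mul_assoc _ _ _)
    show x.fiber + y.fiber + D.f x.base y.base + z.fiber + D.f (x.base * y.base) z.base
        = x.fiber + (y.fiber + z.fiber + D.f y.base z.base) + D.f x.base (y.base * z.base)
    rw [← sub_eq_zero, ← neg_eq_zero, ← D.isTwoCocycle x.base y.base z.base]
    abel
  one_mul x := by
    refine Extension.ext ?_ (one_mul _)
    show 0 + x.fiber + D.f 1 x.base = x.fiber
    rw [D.map_one_left]
    abel
  mul_one x := by
    refine Extension.ext ?_ (mul_one _)
    show x.fiber + 0 + D.f x.base 1 = x.fiber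
    rw [D.map_one_right]
    abel
  inv_mul_cancel x := by
    refine Extension.ext ?_ (inv_mul_cancel _)
    show -x.fiber - D.f x.base x.base⁻¹ + x.fiber + D.f x.base⁻¹ x.base = 0
    rw [D.map_inv_self]
    abel

@[simp] lemma fiber_mul (x y : Extension D) :
    (x * y).fiber = x.fiber + y.fiber + D.f x.base y.base := rfl
@[simp] lemma base_mul (x y : Extension D) : (x * y).base = x.base * y.base := rfl
@[simp] lemma fiber_inv (x : Extension D) :
    x⁻¹.fiber = -x.fiber - D.f x.base x.base⁻¹ := rfl
@[simp] lemma base_inv (x : Extension D) : x⁻¹.base = x.base⁻¹ := rfl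

def proj : Extension D →* G where
  toFun := base
  map_one' := rfl
  map_mul' _ _ := rfl

@[simp] lemma proj_apply (x : Extension D) : proj x = x.base := rfl

lemma mk_one_mul (w : QZ) (x : Extension D) :
    (⟨w, 1⟩ : Extension D) * x = ⟨w + x.fiber, x.base⟩ := by
  refine Extension.ext ?_ (one_mul _)
  show w + x.fiber + D.f 1 x.base = w + x.fiber
  rw [D.map_one_left, add_zero]

lemma commute_mk_one (w : QZ) (x : Extension D) : Commute (⟨w, 1⟩ : Extension D) x := by
  refine Extension.ext ?_ (by simp)
  show w + x.fiber + D.f 1 x.base = x.fiber + w + D.f x.base 1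
  rw [D.map_one_left, D.map_one_right]
  abel

lemma mk_one_pow (w : QZ) (n : ℕ) : (⟨w, 1⟩ : Extension D) ^ n = ⟨n • w, 1⟩ := by
  induction n with
  | zero => rw [pow_zero, zero_smul]; rfl
  | succ n ih => rw [pow_succ, ih, mk_one_mul, succ_nsmul]

/-- Uses that `ℚ/ℤ` is divisible. -/
lemma exists_base_eq_pow_eq_one {n : ℕ} (hn : n ≠ 0) {g : G} (hg : g ^ n = 1) :
    ∃ x : Extension D, x.base = g ∧ x ^ n = 1 := by
  obtain ⟨t, ht⟩ : ∃ t : QZ, (⟨0, g⟩ : Extension D) ^ n = ⟨t, 1⟩ :=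
    ⟨_, Extension.ext rfl (by rw [← proj_apply, map_pow, proj_apply, hg])⟩
  obtain ⟨r, rfl⟩ := QuotientAddGroup.mk_surjective t
  refine ⟨⟨((-r / n : ℚ) : QZ), g⟩, rfl, ?_⟩
  have hx : (⟨((-r / n : ℚ) : QZ), g⟩ : Extension D) = ⟨((-r / n : ℚ) : QZ), 1⟩ * ⟨0, g⟩ := by
    rw [mk_one_mul, add_zero]
  rw [hx, (commute_mk_one _ _).mul_pow, mk_one_pow, ht, mk_one_mul]
  refine Extension.ext ?_ rfl
  show n • ((-r / n : ℚ) : QZ) + r = 0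
  rw [← QuotientAddGroup.mk_nsmul, ← QuotientAddGroup.mk_add, nsmul_eq_mul,
    mul_div_cancel₀ _ (Nat.cast_ne_zero.mpr hn), neg_add_cancel, QuotientAddGroup.mk_zero]

end Extension

end Cocycles

section Commutators

variable {K L : Type} [Group K] [Group L]

-- Mathlib's `⁅x, y⁆` is `x * y * x⁻¹ * y⁻¹`; the presentation uses the other convention.
def cmt (x y : K) : K := x⁻¹ * y⁻¹ * x * y

lemma cmt_eq_one_iff {x y : K} : cmt x y = 1 ↔ Commute x y := by
  rw [show cmt x y = (y * x)⁻¹ * (x * y) by simp only [cmt, mul_inv_rev, mul_assoc],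
    inv_mul_eq_one, eq_comm]
  rfl

lemma cmt_one_right (x : K) : cmt x 1 = 1 := by
  simp [cmt]

lemma map_cmt (f : K →* L) (x y : K) : f (cmt x y) = cmt (f x) (f y) := by
  simp only [cmt, _root_.map_mul, _root_.map_inv]

lemma cmt_mul_left (a b c : K) : cmt (a * b) c = b⁻¹ * cmt a c * b * cmt b c := by
  simp only [cmt]
  group

lemma cmt_mul_right (a b c : K) : cmt a (b * c) = cmt a c * c⁻¹ * cmt a b * c := by
  simp only [cmt]
  group

lemma cmt_mul_inv_left_of_mem_center {x y z : K} (hx : cmt x z ∈ Subgroup.center K)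
    (hy : cmt y z ∈ Subgroup.center K) : cmt (x * y⁻¹) z = cmt x z * (cmt y z)⁻¹ := by
  have key := cmt_mul_left (x * y⁻¹) y z
  rw [inv_mul_cancel_right] at key
  have hconj : y⁻¹ * cmt (x * y⁻¹) z * y = cmt x z * (cmt y z)⁻¹ := by
    rw [key]
    group
  have hcentral := Subgroup.mem_center_iff.mp (mul_mem hx (inv_mem hy)) y
  calc cmt (x * y⁻¹) z = y * (y⁻¹ * cmt (x * y⁻¹) z * y) * y⁻¹ := by group
    _ = cmt x z * (cmt y z)⁻¹ := by rw [hconj, hcentral, mul_inv_cancel_right]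

lemma cmt_pow_right {x y : K} (hd : cmt (cmt x y) y ∈ Subgroup.center K) (n : ℕ) :
    cmt x (y ^ n) = cmt x y ^ n * cmt (cmt x y) y ^ n.choose 2 := by
  set c := cmt x y
  set d := cmt c y
  have hconj : y⁻¹ * c * y = c * d := by
    simp only [d, cmt]
    group
  have hcd : Commute c d := Subgroup.mem_center_iff.mp hd c
  induction n with
  | zero => simp [cmt]
  | succ n ih =>
    have hdk := Subgroup.mem_center_iff.mp (Subgroup.pow_mem _ hd (n.choose 2)) y
    have hk : (n + 1).choose 2 = n + n.choose 2 := by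
      rw [Nat.choose_succ_succ, Nat.choose_one_right]
    have hpow : (y⁻¹ * c * y) ^ n = y⁻¹ * c ^ n * y := by
      simpa using conj_pow (a := y⁻¹) (b := c) (i := n)
    calc cmt x (y ^ (n + 1)) = c * (y⁻¹ * c ^ n * y) * d ^ n.choose 2 := by
          rw [pow_succ, cmt_mul_right, ih]
          simp only [mul_assoc, ← hdk]
          rfl
      _ = c * (c * d) ^ n * d ^ n.choose 2 := by
          rw [← hconj, ← hpow]
      _ = c ^ (n + 1) * d ^ (n + 1).choose 2 := by
          rw [hk, hcd.mul_pow, pow_succ' c n, pow_add]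
          simp only [mul_assoc]

lemma cmt_pow_right_of_mem_center {x y : K} (hc : cmt x y ∈ Subgroup.center K) (n : ℕ) :
    cmt x (y ^ n) = cmt x y ^ n := by
  have hd : cmt (cmt x y) y = 1 := cmt_eq_one_iff.mpr (Subgroup.mem_center_iff.mp hc y).symm
  have h := cmt_pow_right (hd ▸ one_mem _) n
  rwa [hd, one_pow, mul_one] at h

end Commutators

namespace Extension

variable {G : Type} [Group G] {D : NormalizedCocycle G}

/-- The kernel of `proj` is central. -/
lemma cmt_congr {x x' y y' : Extension D} (hx : x.base = x'.base) (hy : y.base = y'.base) :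
    cmt x y = cmt x' y' := by
  refine Extension.ext ?_ (by simp only [cmt, base_mul, base_inv, hx, hy])
  simp only [cmt, fiber_mul, fiber_inv, base_mul, base_inv, hx, hy]
  abel

lemma exists_section_of_isTwoCoboundary (H : Subgroup G)
    (hH : IsTwoCoboundary fun a b : H => D.f a b) :
    ∃ s : H →* Extension D, ∀ a, (s a).base = a := by
  obtain ⟨c, hc⟩ := hH
  refine ⟨MonoidHom.mk' (fun a => ⟨-c a, a⟩) fun a b => Extension.ext ?_ rfl, fun _ => rfl⟩
  show -c (a * b) = -c a + -c b + D.f a b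
  rw [show D.f a b = _ from hc a b]
  abel

lemma isTwoCoboundary_of_section (s : G →* Extension D) (hs : ∀ g, (s g).base = g) :
    IsTwoCoboundary D.f := by
  refine ⟨fun g => -(s g).fiber, fun g h => ?_⟩
  have hmul := congrArg fiber (_root_.map_mul s g h)
  rw [fiber_mul, hs, hs] at hmul
  dsimp only
  rw [hmul]
  abel

/-- Over the bicyclic subgroup generated by two commuting elements the extension splits. -/
theorem commute_of_commute_base (hD : IsBicyclicallyTrivial D.f) {x y : Extension D}
    (h : Commute x.base y.base) : Commute x y := by
  set A := Subgroup.closure ({x.base, y.base} : Set G)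
  have hcomm := Subgroup.isMulCommutative_closure (k := {x.base, y.base}) (by
    simp only [Set.mem_insert_iff, Set.mem_singleton_iff]
    rintro _ (rfl | rfl) _ (rfl | rfl)
    exacts [rfl, h.eq, h.eq.symm, rfl])
  obtain ⟨s, hs⟩ := exists_section_of_isTwoCoboundary A (hD A ⟨hcomm.is_comm.comm, _, _, rfl⟩)
  let a : A := ⟨x.base, Subgroup.subset_closure (by simp)⟩
  let b : A := ⟨y.base, Subgroup.subset_closure (by simp)⟩
  rw [← cmt_eq_one_iff, cmt_congr (hs a).symm (hs b).symm, ← map_cmt,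
    cmt_eq_one_iff.mpr (hcomm.is_comm.comm a b), _root_.map_one]

lemma mem_center_of_base_mem_center (hD : IsBicyclicallyTrivial D.f) {x : Extension D}
    (hx : x.base ∈ Subgroup.center G) : x ∈ Subgroup.center (Extension D) :=
  Subgroup.mem_center_iff.mpr fun y =>
    (commute_of_commute_base hD (Subgroup.mem_center_iff.mp hx y.base)).eq

end Extension

section PresentedGroups

variable {α : Type} {R : Set (FreeGroup α)}

lemma mem_center_of_forall_commute_of {g : PresentedGroup R}
    (h : ∀ a, Commute (PresentedGroup.of a) g) : g ∈ Subgroup.center (PresentedGroup R) := by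
  rw [← Subgroup.centralizer_univ, ← Subgroup.coe_top, ← PresentedGroup.closure_range_of,
    Subgroup.centralizer_closure, Subgroup.mem_centralizer_iff]
  rintro _ ⟨a, rfl⟩
  exact h a

lemma isTwoCoboundary_of_lift {D : NormalizedCocycle (PresentedGroup R)} (F : α → Extension D)
    (hF : ∀ a, (F a).base = PresentedGroup.of a) (hR : ∀ r ∈ R, FreeGroup.lift F r = 1) :
    IsTwoCoboundary D.f := by
  have hsection : Extension.proj.comp (PresentedGroup.toGroup hR) = MonoidHom.id _ :=
    PresentedGroup.ext fun a => by simp [PresentedGroup.toGroup.of, hF]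
  exact Extension.isTwoCoboundary_of_section (PresentedGroup.toGroup hR)
    fun g => DFunLike.congr_fun hsection g

end PresentedGroups

section Presentation

variable {K L : Type} [Group K] [Group L] {R : Set (FreeGroup Gen)}

lemma c_eq_cmt (x y : FreeGroup Gen) : c x y = cmt x y := rfl

lemma commute_of_c_mem {x y : Gen} (h : c (of x) (of y) ∈ R) :
    Commute (PresentedGroup.of x : PresentedGroup R) (PresentedGroup.of y) := by
  rw [← cmt_eq_one_iff, ← PresentedGroup.one_of_mem h, c_eq_cmt, map_cmt]
  rfl

lemma cmt_eq_of_c_mul_inv_mem {x y z : Gen} (h : c (of x) (of y) * (of z)⁻¹ ∈ R) :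
    cmt (PresentedGroup.of x : PresentedGroup R) (PresentedGroup.of y) = PresentedGroup.of z := by
  have h' := PresentedGroup.mk_eq_mk_of_mul_inv_mem h
  rwa [c_eq_cmt, map_cmt] at h'

lemma lift_c_eq_one_of_mem {D : NormalizedCocycle (PresentedGroup R)}
    (hD : IsBicyclicallyTrivial D.f) {F : Gen → Extension D}
    (hF : ∀ z, (F z).base = PresentedGroup.of z) {x y : Gen} (h : c (of x) (of y) ∈ R) :
    FreeGroup.lift F (c (of x) (of y)) = 1 := by
  rw [c_eq_cmt, map_cmt, FreeGroup.lift_apply_of, FreeGroup.lift_apply_of, cmt_eq_one_iff]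
  exact Extension.commute_of_commute_base hD (by rw [hF, hF]; exact commute_of_c_mem h)

variable {p : ℕ}

lemma of_pow_eq_one (x : Gen) : (PresentedGroup.of x : PresentedGroup (rels p)) ^ p = 1 := by
  rw [PresentedGroup.of, ← _root_.map_pow]
  exact PresentedGroup.one_of_mem (by cases x <;> simp [rels])

lemma of_b1_mem_center : (PresentedGroup.of .b1 : PresentedGroup (rels p)) ∈ Subgroup.center _ :=
  mem_center_of_forall_commute_of fun x => by
    cases x
    exacts [commute_of_c_mem (by simp [rels]), commute_of_c_mem (by simp [rels]),
      commute_of_c_mem (by simp [rels]), commute_of_c_mem (by simp [rels]), .refl _,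
      (commute_of_c_mem (by simp [rels])).symm]

lemma of_b2_mem_center : (PresentedGroup.of .b2 : PresentedGroup (rels p)) ∈ Subgroup.center _ :=
  mem_center_of_forall_commute_of fun x => by
    cases x
    exacts [commute_of_c_mem (by simp [rels]), commute_of_c_mem (by simp [rels]),
      commute_of_c_mem (by simp [rels]), commute_of_c_mem (by simp [rels]),
      commute_of_c_mem (by simp [rels]), .refl _]

lemma cmt_of_a1_of_a2 :
    cmt (PresentedGroup.of .a1 : PresentedGroup (rels p)) (PresentedGroup.of .a2) =
      PresentedGroup.of .b :=
  cmt_eq_of_c_mul_inv_mem (by simp [rels])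

lemma cmt_of_b_of_a1 :
    cmt (PresentedGroup.of .b : PresentedGroup (rels p)) (PresentedGroup.of .a1) =
      PresentedGroup.of .b1 :=
  cmt_eq_of_c_mul_inv_mem (by simp [rels])

lemma cmt_of_b_of_a2 :
    cmt (PresentedGroup.of .b : PresentedGroup (rels p)) (PresentedGroup.of .a2) =
      PresentedGroup.of .b2 :=
  cmt_eq_of_c_mul_inv_mem (by simp [rels])

lemma cmt_of_a_of_a1 :
    cmt (PresentedGroup.of .a : PresentedGroup (rels p)) (PresentedGroup.of .a1) =
      PresentedGroup.of .b1 :=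
  cmt_eq_of_c_mul_inv_mem (by simp [rels])

lemma commute_of_a_mul_inv_of_b_of_a1 :
    Commute (PresentedGroup.of .a * (PresentedGroup.of .b)⁻¹ : PresentedGroup (rels p))
      (PresentedGroup.of .a1) := by
  rw [← cmt_eq_one_iff, cmt_mul_inv_left_of_mem_center (cmt_of_a_of_a1 ▸ of_b1_mem_center)
    (cmt_of_b_of_a1 ▸ of_b1_mem_center), cmt_of_a_of_a1, cmt_of_b_of_a1, mul_inv_cancel]

def liftGen (A A₁ A₂ : K) : Gen → K
  | .a => A
  | .a1 => A₁
  | .a2 => A₂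
  | .b => cmt A₁ A₂
  | .b1 => cmt (cmt A₁ A₂) A₁
  | .b2 => cmt (cmt A₁ A₂) A₂

lemma map_liftGen (f : K →* L) (A A₁ A₂ : K) (x : Gen) :
    f (liftGen A A₁ A₂ x) = liftGen (f A) (f A₁) (f A₂) x := by
  cases x <;> simp only [liftGen, map_cmt]

lemma liftGen_of :
    liftGen (PresentedGroup.of .a) (PresentedGroup.of .a1) (PresentedGroup.of .a2) =
      (PresentedGroup.of : Gen → PresentedGroup (rels p)) := by
  funext x
  cases x <;> simp only [liftGen, cmt_of_a1_of_a2, cmt_of_b_of_a1, cmt_of_b_of_a2]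

end Presentation

section Lifts

variable {p : ℕ} {D : NormalizedCocycle (PresentedGroup (rels p))} {A A₁ A₂ : Extension D}

lemma base_liftGen (hA : A.base = PresentedGroup.of .a) (hA₁ : A₁.base = PresentedGroup.of .a1)
    (hA₂ : A₂.base = PresentedGroup.of .a2) (x : Gen) :
    (liftGen A A₁ A₂ x).base = PresentedGroup.of x := by
  rw [← Extension.proj_apply, map_liftGen, Extension.proj_apply, Extension.proj_apply,
    Extension.proj_apply, hA, hA₁, hA₂, liftGen_of]

lemma liftGen_b1_b2_mem_center (hD : IsBicyclicallyTrivial D.f)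
    (hbase : ∀ x, (liftGen A A₁ A₂ x).base = PresentedGroup.of x) :
    liftGen A A₁ A₂ .b1 ∈ Subgroup.center (Extension D) ∧
      liftGen A A₁ A₂ .b2 ∈ Subgroup.center (Extension D) :=
  ⟨Extension.mem_center_of_base_mem_center hD (hbase .b1 ▸ of_b1_mem_center),
    Extension.mem_center_of_base_mem_center hD (hbase .b2 ▸ of_b2_mem_center)⟩

/-- The relation `[α, α₁] = β₁` is the one not built into `liftGen`; it lifts because
`αβ⁻¹` commutes with `α₁`. -/
lemma cmt_liftGen_a_a1 (hD : IsBicyclicallyTrivial D.f)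
    (hbase : ∀ x, (liftGen A A₁ A₂ x).base = PresentedGroup.of x) :
    cmt A A₁ = cmt (cmt A₁ A₂) A₁ := by
  have hcomm : Commute (A * (cmt A₁ A₂)⁻¹) A₁ := by
    refine Extension.commute_of_commute_base hD ?_
    show Commute ((liftGen A A₁ A₂ .a).base * (liftGen A A₁ A₂ .b).base⁻¹)
      (liftGen A A₁ A₂ .a1).base
    rw [hbase, hbase, hbase]
    exact commute_of_a_mul_inv_of_b_of_a1
  have hcen : cmt A A₁ ∈ Subgroup.center (Extension D) := by
    refine Extension.mem_center_of_base_mem_center hD ?_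
    show (cmt (liftGen A A₁ A₂ .a) (liftGen A A₁ A₂ .a1)).base ∈ _
    rw [← Extension.proj_apply, map_cmt, Extension.proj_apply, Extension.proj_apply, hbase, hbase,
      cmt_of_a_of_a1]
    exact of_b1_mem_center
  rwa [← cmt_eq_one_iff, cmt_mul_inv_left_of_mem_center hcen (liftGen_b1_b2_mem_center hD hbase).1,
    mul_inv_eq_one] at hcomm

lemma liftGen_pow_eq_one (hp : p.Prime) (hp2 : 2 < p) (hD : IsBicyclicallyTrivial D.f)
    (hbase : ∀ x, (liftGen A A₁ A₂ x).base = PresentedGroup.of x)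
    (hAp : A ^ p = 1) (hA₁p : A₁ ^ p = 1) (hA₂p : A₂ ^ p = 1) (x : Gen) :
    liftGen A A₁ A₂ x ^ p = 1 := by
  obtain ⟨hb₁, hb₂⟩ := liftGen_b1_b2_mem_center hD hbase
  have hb₁p : cmt (cmt A₁ A₂) A₁ ^ p = 1 := by
    rw [← cmt_pow_right_of_mem_center hb₁, hA₁p, cmt_one_right]
  have hb₂p : cmt (cmt A₁ A₂) A₂ ^ p = 1 := by
    rw [← cmt_pow_right_of_mem_center hb₂, hA₂p, cmt_one_right]
  cases x
  · exact hAp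
  · exact hA₁p
  · exact hA₂p
  · -- `p` is odd, so it divides `p.choose 2`
    obtain ⟨k, hk⟩ := hp.dvd_choose_self (k := 2) two_ne_zero hp2
    have h := cmt_pow_right hb₂ p
    rw [hA₂p, cmt_one_right, hk, pow_mul, hb₂p, one_pow, mul_one] at h
    exact h.symm
  · exact hb₁p
  · exact hb₂p

lemma lift_liftGen_eq_one (hp : p.Prime) (hp2 : 2 < p) (hD : IsBicyclicallyTrivial D.f)
    (hbase : ∀ x, (liftGen A A₁ A₂ x).base = PresentedGroup.of x)
    (hAp : A ^ p = 1) (hA₁p : A₁ ^ p = 1) (hA₂p : A₂ ^ p = 1) :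
    ∀ r ∈ rels p, FreeGroup.lift (liftGen A A₁ A₂) r = 1 := by
  intro r hr
  have hr' := hr
  simp only [rels, Set.mem_insert_iff, Set.mem_singleton_iff] at hr'
  rcases hr' with rfl | rfl | rfl | rfl | rfl | rfl | rfl | rfl | rfl | rfl | rfl | rfl | rfl |
    rfl | rfl | rfl | rfl | rfl | rfl | rfl | rfl
  iterate 4
    rw [_root_.map_mul, _root_.map_inv, c_eq_cmt, map_cmt]
    simp only [FreeGroup.lift_apply_of, liftGen, cmt_liftGen_a_a1 hD hbase, mul_inv_cancel]
  iterate 11 exact lift_c_eq_one_of_mem hD hbase hr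
  all_goals
    rw [_root_.map_pow, FreeGroup.lift_apply_of]
    exact liftGen_pow_eq_one hp hp2 hD hbase hAp hA₁p hA₂p _

end Lifts

theorem bogomolov_trivial_Phi19 (p : ℕ) (hp : p.Prime) (h3 : 3 < p) :
    BogomolovMultiplierIsTrivial (PresentedGroup (rels p)) := by
  refine bogomolovMultiplierIsTrivial_of_normalized fun D hD => ?_
  obtain ⟨A, hA, hAp⟩ :=
    Extension.exists_base_eq_pow_eq_one (D := D) hp.ne_zero (of_pow_eq_one .a)
  obtain ⟨A₁, hA₁, hA₁p⟩ :=
    Extension.exists_base_eq_pow_eq_one (D := D) hp.ne_zero (of_pow_eq_one .a1)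
  obtain ⟨A₂, hA₂, hA₂p⟩ :=
    Extension.exists_base_eq_pow_eq_one (D := D) hp.ne_zero (of_pow_eq_one .a2)
  have hbase := base_liftGen hA hA₁ hA₂
  exact isTwoCoboundary_of_lift _ hbase
    (lift_liftGen_eq_one hp (by omega) hD hbase hAp hA₁p hA₂p)

end Stmt1
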